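/- arXiv:1603.03916 — 2 statements merged into one kernel-verified Lean document; each statement's English description precedes it below -/
import Mathlib

section
/- Consider n unit-process-time jobs with release times r_j and deadlines d_j, and a finite collection of open forbidden regions F_γ = (a_γ, b_γ) during which no job may start. The greedy schedule that processes jobs in order, setting t_1 = r_1 (with jobs sorted so that assigned start times are nondecreasing) and t_{i+1} = max(r_{i+1}, t_i + 1), and then delaying any start time falling in a forbidden region to the right endpoint of that region, produces the pointwise-minimal schedule among all schedules with that job order satisfying: t_j ≥ r_j for all j, |t_i − t_j| ≥ 1 for i ≠ j with the given order, and t_j ∉ F_γ for all j, γ. -/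
/-- The least start time `x ≥ s` avoiding all open forbidden regions `(a γ, b γ)`. -/
noncomputable def adjustStart {Γ : Type*} (a b : Γ → ℝ) (s : ℝ) : ℝ :=
  sInf {x : ℝ | s ≤ x ∧ ∀ γ : Γ, x ∉ Set.Ioo (a γ) (b γ)}

/-- A schedule is feasible (ignoring deadlines) for the given order:
release times respected, unit spacing between consecutive jobs, and no
start time inside a forbidden region. -/
def FeasibleSchedule {n : ℕ} {Γ : Type*} (r : Fin n → ℝ) (a b : Γ → ℝ)
    (t : Fin n → ℝ) : Prop :=
  (∀ j, r j ≤ t j) ∧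
  (∀ i : ℕ, ∀ h : i + 1 < n,
    t ⟨i, Nat.lt_of_succ_lt h⟩ + 1 ≤ t ⟨i + 1, h⟩) ∧
  (∀ j, ∀ γ : Γ, t j ∉ Set.Ioo (a γ) (b γ))

lemma adjustStart_mem {Γ : Type*} [Fintype Γ] (a b : Γ → ℝ) (s : ℝ) :
    s ≤ adjustStart a b s ∧ ∀ γ : Γ, adjustStart a b s ∉ Set.Ioo (a γ) (b γ) := by
  classical
  have hclosed : IsClosed {x : ℝ | s ≤ x ∧ ∀ γ : Γ, x ∉ Set.Ioo (a γ) (b γ)} := by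
    have : {x : ℝ | s ≤ x ∧ ∀ γ : Γ, x ∉ Set.Ioo (a γ) (b γ)} =
        Set.Ici s ∩ ⋂ γ : Γ, (Set.Ioo (a γ) (b γ))ᶜ := by
      ext x; simp [Set.mem_iInter]
    rw [this]
    exact isClosed_Ici.inter (isClosed_iInter fun γ => isOpen_Ioo.isClosed_compl)
  have hne : Set.Nonempty {x : ℝ | s ≤ x ∧ ∀ γ : Γ, x ∉ Set.Ioo (a γ) (b γ)} := by
    rcases isEmpty_or_nonempty Γ with h | h
    · exact ⟨s, le_refl s, fun γ => (h.false γ).elim⟩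
    · refine ⟨max s (Finset.univ.sup' Finset.univ_nonempty b), le_max_left _ _,
        fun γ hmem => ?_⟩
      have : b γ ≤ max s (Finset.univ.sup' Finset.univ_nonempty b) :=
        le_trans (Finset.le_sup' b (Finset.mem_univ γ)) (le_max_right _ _)
      exact absurd hmem.2 (not_lt.mpr this)
  have hbdd : BddBelow {x : ℝ | s ≤ x ∧ ∀ γ : Γ, x ∉ Set.Ioo (a γ) (b γ)} :=
    ⟨s, fun x hx => hx.1⟩
  exact hclosed.csInf_mem hne hbdd

lemma adjustStart_le {Γ : Type*} (a b : Γ → ℝ) (s x : ℝ)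
    (hx : s ≤ x) (hγ : ∀ γ : Γ, x ∉ Set.Ioo (a γ) (b γ)) :
    adjustStart a b s ≤ x :=
  csInf_le ⟨s, fun y hy => hy.1⟩ ⟨hx, hγ⟩

theorem greedy_unit_schedule_minimal {n : ℕ} {Γ : Type*} [Fintype Γ]
    (r : Fin n → ℝ) (a b : Γ → ℝ)
    (t : Fin n → ℝ)
    (ht0 : ∀ h : 0 < n, t ⟨0, h⟩ = adjustStart a b (r ⟨0, h⟩))
    (htsucc : ∀ i : ℕ, ∀ h : i + 1 < n,
      t ⟨i + 1, h⟩ =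
        adjustStart a b (max (r ⟨i + 1, h⟩) (t ⟨i, Nat.lt_of_succ_lt h⟩ + 1))) :
    FeasibleSchedule r a b t ∧
      ∀ t' : Fin n → ℝ, FeasibleSchedule r a b t' → ∀ j, t j ≤ t' j := by
  constructor
  · refine ⟨?_, ?_, ?_⟩
    · intro j
      rcases j with ⟨i, hi⟩
      cases i with
      | zero =>
        rw [ht0 hi]; exact (adjustStart_mem a b _).1
      | succ i =>
        rw [htsucc i hi]
        exact le_trans (le_max_left _ _) (adjustStart_mem a b _).1
    · intro i h
      rw [htsucc i h]
      exact le_trans (le_max_right _ _) (adjustStart_mem a b _).1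
    · intro j γ
      rcases j with ⟨i, hi⟩
      cases i with
      | zero => rw [ht0 hi]; exact (adjustStart_mem a b _).2 γ
      | succ i => rw [htsucc i hi]; exact (adjustStart_mem a b _).2 γ
  · intro t' ht' j
    obtain ⟨hr', hsp', hγ'⟩ := ht'
    have key : ∀ i : ℕ, ∀ hi : i < n, t ⟨i, hi⟩ ≤ t' ⟨i, hi⟩ := by
      intro i
      induction i with
      | zero =>
        intro hi
        rw [ht0 hi]
        exact adjustStart_le a b _ _ (hr' _) (hγ' _)
      | succ i ih =>
        intro hi
        rw [htsucc i hi]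
        refine adjustStart_le a b _ _ (max_le (hr' _) ?_) (hγ' _)
        calc t ⟨i, Nat.lt_of_succ_lt hi⟩ + 1
            ≤ t' ⟨i, Nat.lt_of_succ_lt hi⟩ + 1 := by
              linarith [ih (Nat.lt_of_succ_lt hi)]
          _ ≤ t' ⟨i + 1, hi⟩ := hsp' i hi
    have := key j.1 j.2
    simpa using this
end

section
/- Fix a sequence of jobs π over a finite set M with release times R_j, process-time function P_j(·) ≥ 0, an initial blocking time P_max ≥ 0, and finitely many idle-time intervals (R̄_γ, P̄_γ). Define the greedy schedule by T_{π_1} = max(R_{π_1}, P_max), T_{π_i} = max(R_{π_i}, T_{π_{i−1}} + P_{π_{i−1}}(T_{π_{i−1}})) for i ≥ 2, and whenever T_{π_i} ∈ [R̄_γ, ∞) with T_{π_i} < P̄_γ or T_{π_i} + P_{π_i}(T_{π_i}) > R̄_γ with T_{π_i} < R̄_γ, delay T_{π_i} to P̄_γ (processing idle-times in increasing order of R̄_γ). Assume P_j is nondecreasing composed with T (i.e., t ↦ t + P_j(t) is nondecreasing). Then the resulting schedule satisfies: T_{π_i} ≥ R_{π_i}, the intervals (T_{π_i}, T_{π_i}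 + P_{π_i}(T_{π_i})) are pairwise disjoint, and each such interval is disjoint from every idle-time (R̄_γ, P̄_γ). -/
/-- One delaying step of the greedy IIT schedule for a single idle-time
`(p.1, p.2) = (R̄, P̄)`: if the candidate start time `s` lies at or past `R̄`,
delay it to at least `P̄`; otherwise, if the occupancy `(s, s + Pr s)` would
overlap the idle-time, delay the start to `P̄`. -/
noncomputable def idleStep (Pr : ℝ → ℝ) (s : ℝ) (p : ℝ × ℝ) : ℝ :=
  if p.1 ≤ s then max s p.2
  else if p.1 < s + Pr s then p.2
  else s

/-- Delay a candidate start time past all idle-times, processed in the given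
(list) order. -/
noncomputable def idleAdjust (Pr : ℝ → ℝ) (idles : List (ℝ × ℝ)) (s : ℝ) : ℝ :=
  idles.foldl (idleStep Pr) s

/-!
Each start time is obtained by only ever delaying a candidate start, so it is at least the
release time and at least the previous vehicle's exit; since processing times are
nonnegative, consecutive occupancy intervals are then ordered in time, hence disjoint.
Idle-time avoidance is an invariant of the delaying loop: right after the step for `(R̄, P̄)`
the start is either at least `P̄`, or strictly before `R̄` with exit at most `R̄`. Both states
survive every later step, because later idle-times start no earlier than `R̄`: the first only
moves the start further right, and in the second the later steps see a start before their own
left endpoint and an exit no later than it, so they leave the start alone.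
-/

open Set

/-- The stable form of "`(s, s + Pr s)` avoids the idle-time `p`" kept by the delaying loop. -/
def Avoids (Pr : ℝ → ℝ) (p : ℝ × ℝ) (s : ℝ) : Prop :=
  p.2 ≤ s ∨ (s + Pr s ≤ p.1 ∧ s < p.1)

section IdleAdjust

variable (Pr : ℝ → ℝ)

theorem idleAdjust_cons (q : ℝ × ℝ) (L : List (ℝ × ℝ)) (s : ℝ) :
    idleAdjust Pr (q :: L) s = idleAdjust Pr L (idleStep Pr s q) :=
  rfl

theorem le_idleStep {q : ℝ × ℝ} (hq : q.1 ≤ q.2) (s : ℝ) : s ≤ idleStep Pr s q := by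
  unfold idleStep
  split_ifs with hge
  · exact le_max_left _ _
  · exact (lt_of_not_ge hge).le.trans hq
  · exact le_rfl

theorem le_idleAdjust {L : List (ℝ × ℝ)} (hL : ∀ q ∈ L, q.1 ≤ q.2) (s : ℝ) :
    s ≤ idleAdjust Pr L s := by
  induction L generalizing s with
  | nil => exact le_rfl
  | cons q L ih =>
    rw [idleAdjust_cons]
    exact (le_idleStep Pr (hL q List.mem_cons_self) s).trans
      (ih (fun r hr => hL r (List.mem_cons_of_mem _ hr)) _)

theorem avoids_idleStep (p : ℝ × ℝ) (s : ℝ) : Avoids Pr p (idleStep Pr s p) := by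
  unfold idleStep Avoids
  split_ifs with hge hoverlap
  · exact Or.inl (le_max_right _ _)
  · exact Or.inl le_rfl
  · exact Or.inr ⟨le_of_not_gt hoverlap, lt_of_not_ge hge⟩

theorem Avoids.idleStep_of_fst_le {p q : ℝ × ℝ} {s : ℝ} (h : Avoids Pr p s) (hq : q.1 ≤ q.2)
    (hpq : p.1 ≤ q.1) : Avoids Pr p (idleStep Pr s q) := by
  rcases h with hafter | ⟨hexit, hbefore⟩
  · exact Or.inl (hafter.trans (le_idleStep Pr hq s))
  · have hfixed : idleStep Pr s q = s := by
      unfold idleStep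
      rw [if_neg (by linarith), if_neg (by linarith)]
    rw [hfixed]
    exact Or.inr ⟨hexit, hbefore⟩

theorem Avoids.idleAdjust_of_fst_le {p : ℝ × ℝ} {s : ℝ} (h : Avoids Pr p s) {L : List (ℝ × ℝ)}
    (hL : ∀ q ∈ L, q.1 ≤ q.2) (hpL : ∀ q ∈ L, p.1 ≤ q.1) :
    Avoids Pr p (idleAdjust Pr L s) := by
  induction L generalizing s with
  | nil => exact h
  | cons q L ih =>
    rw [idleAdjust_cons]
    exact ih (h.idleStep_of_fst_le Pr (hL q List.mem_cons_self) (hpL q List.mem_cons_self))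
      (fun r hr => hL r (List.mem_cons_of_mem _ hr))
      (fun r hr => hpL r (List.mem_cons_of_mem _ hr))

theorem avoids_idleAdjust {L : List (ℝ × ℝ)} (hL : ∀ q ∈ L, q.1 ≤ q.2)
    (hsorted : L.Pairwise (fun a b => a.1 ≤ b.1)) (s : ℝ) :
    ∀ p ∈ L, Avoids Pr p (idleAdjust Pr L s) := by
  induction L generalizing s with
  | nil => simp
  | cons q L ih =>
    have hL' : ∀ r ∈ L, r.1 ≤ r.2 := fun r hr => hL r (List.mem_cons_of_mem _ hr)
    rw [List.pairwise_cons] at hsorted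
    intro p hp
    rw [idleAdjust_cons]
    rcases List.mem_cons.mp hp with rfl | hp
    · exact (avoids_idleStep Pr p s).idleAdjust_of_fst_le Pr hL' hsorted.1
    · exact ih hL' hsorted.2 _ p hp

end IdleAdjust

theorem Set.Ioo_inter_Ioo_eq_empty_of_le {α : Type*} [Preorder α] {a₁ b₁ a₂ b₂ : α}
    (h : b₁ ≤ a₂) : Ioo a₁ b₁ ∩ Ioo a₂ b₂ = ∅ :=
  eq_empty_of_forall_notMem fun _ hx => lt_asymm (hx.1.2.trans_le h) hx.2.1

theorem Avoids.Ioo_inter_eq_empty {Pr : ℝ → ℝ} {p : ℝ × ℝ} {s : ℝ} (h : Avoids Pr p s) :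
    Ioo s (s + Pr s) ∩ Ioo p.1 p.2 = ∅ := by
  rcases h with hafter | ⟨hexit, -⟩
  · rw [inter_comm]
    exact Ioo_inter_Ioo_eq_empty_of_le hafter
  · exact Ioo_inter_Ioo_eq_empty_of_le hexit

theorem Fin.monotone_of_le_succ {α : Type*} [Preorder α] {n : ℕ} {f : Fin n → α}
    (h : ∀ k (hk : k + 1 < n), f ⟨k, k.lt_succ_self.trans hk⟩ ≤ f ⟨k + 1, hk⟩) :
    Monotone f := by
  cases n with
  | zero => exact fun i => i.elim0
  | succ n => exact Fin.monotone_iff_le_succ.mpr fun i => h i i.succ.isLt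

theorem Fin.Ioo_inter_Ioo_eq_empty_of_le_succ {α : Type*} [Preorder α] {n : ℕ} {a b : Fin n → α}
    (hab : ∀ i, a i ≤ b i)
    (hstep : ∀ k (hk : k + 1 < n), b ⟨k, k.lt_succ_self.trans hk⟩ ≤ a ⟨k + 1, hk⟩)
    {i j : Fin n} (hij : i ≠ j) : Ioo (a i) (b i) ∩ Ioo (a j) (b j) = ∅ := by
  have hmono : Monotone a :=
    Fin.monotone_of_le_succ fun k hk => (hab _).trans (hstep k hk)
  have hend_le : ∀ {i j : Fin n}, i < j → b i ≤ a j := fun {i j} hlt =>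
    (hstep i (lt_of_le_of_lt (Nat.succ_le_of_lt hlt) j.isLt)).trans
      (hmono (Fin.mk_le_of_le_val (Nat.succ_le_of_lt hlt)))
  rcases hij.lt_or_gt with hlt | hgt
  · exact Ioo_inter_Ioo_eq_empty_of_le (hend_le hlt)
  · rw [inter_comm]
    exact Ioo_inter_Ioo_eq_empty_of_le (hend_le hgt)

theorem greedy_iit_schedule_correct_general {n m : ℕ}
    (R : Fin n → ℝ) (Pr : Fin n → ℝ → ℝ) (Pmax : ℝ)
    (idle : Fin m → ℝ × ℝ)
    (hPr : ∀ j t, 0 ≤ Pr j t)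
    (hidle : ∀ γ : Fin m, (idle γ).1 ≤ (idle γ).2)
    (hsorted : ∀ γ γ' : Fin m, γ ≤ γ' → (idle γ).1 ≤ (idle γ').1)
    (T : Fin n → ℝ)
    (hT0 : ∀ h : 0 < n,
      T ⟨0, h⟩ = idleAdjust (Pr ⟨0, h⟩) (List.ofFn idle) (max (R ⟨0, h⟩) Pmax))
    (hTsucc : ∀ i : ℕ, ∀ h : i + 1 < n,
      T ⟨i + 1, h⟩ = idleAdjust (Pr ⟨i + 1, h⟩) (List.ofFn idle)
        (max (R ⟨i + 1, h⟩)
          (T ⟨i, Nat.lt_of_succ_lt h⟩ +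
            Pr ⟨i, Nat.lt_of_succ_lt h⟩ (T ⟨i, Nat.lt_of_succ_lt h⟩)))) :
    (∀ i, R i ≤ T i) ∧
    (∀ i j, i ≠ j →
      Set.Ioo (T i) (T i + Pr i (T i)) ∩ Set.Ioo (T j) (T j + Pr j (T j)) = ∅) ∧
    (∀ i, ∀ γ : Fin m,
      Set.Ioo (T i) (T i + Pr i (T i)) ∩ Set.Ioo (idle γ).1 (idle γ).2 = ∅) := by
  have hL : ∀ q ∈ List.ofFn idle, q.1 ≤ q.2 := by
    simpa only [List.forall_mem_ofFn_iff] using hidle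
  have hL_sorted : (List.ofFn idle).Pairwise (fun a b => a.1 ≤ b.1) :=
    List.pairwise_ofFn.mpr fun γ γ' hlt => hsorted γ γ' hlt.le
  have hT : ∀ i, ∃ s, R i ≤ s ∧ T i = idleAdjust (Pr i) (List.ofFn idle) s := by
    rintro ⟨_ | k, hk⟩
    · exact ⟨_, le_max_left _ _, hT0 hk⟩
    · exact ⟨_, le_max_left _ _, hTsucc k hk⟩
  refine ⟨fun i => ?_, fun i j hij => ?_, fun i γ => ?_⟩
  · obtain ⟨s, hRs, hTs⟩ := hT i
    exact hRs.trans (hTs ▸ le_idleAdjust _ hL s)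
  · refine Fin.Ioo_inter_Ioo_eq_empty_of_le_succ (a := T) (b := fun i => T i + Pr i (T i))
      (fun i => le_add_of_nonneg_right (hPr _ _))
      (fun k hk => ?_) hij
    rw [hTsucc k hk]
    exact (le_max_right _ _).trans (le_idleAdjust _ hL _)
  · obtain ⟨s, -, hTs⟩ := hT i
    rw [hTs]
    exact (avoids_idleAdjust _ hL hL_sorted s _ (List.mem_ofFn.mpr ⟨γ, rfl⟩)).Ioo_inter_eq_empty

theorem greedy_iit_schedule_correct {n m : ℕ}
    (R : Fin n → ℝ) (Pr : Fin n → ℝ → ℝ) (Pmax : ℝ)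
    (idle : Fin m → ℝ × ℝ)
    (hPmax : 0 ≤ Pmax)
    (hPr : ∀ j t, 0 ≤ Pr j t)
    (hmono : ∀ j, Monotone (fun t => t + Pr j t))
    (hidle : ∀ γ : Fin m, (idle γ).1 ≤ (idle γ).2)
    (hsorted : ∀ γ γ' : Fin m, γ ≤ γ' → (idle γ).1 ≤ (idle γ').1)
    (T : Fin n → ℝ)
    (hT0 : ∀ h : 0 < n,
      T ⟨0, h⟩ = idleAdjust (Pr ⟨0, h⟩) (List.ofFn idle) (max (R ⟨0, h⟩) Pmax))
    (hTsucc : ∀ i : ℕ, ∀ h : i + 1 < n,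
      T ⟨i + 1, h⟩ = idleAdjust (Pr ⟨i + 1, h⟩) (List.ofFn idle)
        (max (R ⟨i + 1, h⟩)
          (T ⟨i, Nat.lt_of_succ_lt h⟩ +
            Pr ⟨i, Nat.lt_of_succ_lt h⟩ (T ⟨i, Nat.lt_of_succ_lt h⟩)))) :
    (∀ i, R i ≤ T i) ∧
    (∀ i j, i ≠ j →
      Set.Ioo (T i) (T i + Pr i (T i)) ∩ Set.Ioo (T j) (T j + Pr j (T j)) = ∅) ∧
    (∀ i, ∀ γ : Fin m,
      Set.Ioo (T i) (T i + Pr i (T i)) ∩ Set.Ioo (idle γ).1 (idle γ).2 = ∅) :=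
  greedy_iit_schedule_correct_general R Pr Pmax idle hPr hidle hsorted T hT0 hTsucc
end
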